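/- arXiv:1505.04697 — 5 statements merged into one kernel-verified Lean document; each statement's English description precedes it below -/
import Mathlib

section
/- (Lemma: bias of the matching estimator.) The bias of the matching estimator of τ_ETT is E[τ̂_M(Y)] − τ_ETT = Σ_{s∈S} w_s · Σ_{i : m(i)=s} y_C(i)·(P_i/n_T(s) − (1−P_i)/n_C(s)). -/
open MeasureTheory Finset

noncomputable section

namespace Rebar

variable {n : ℕ} {S : Type*} [Fintype S] [DecidableEq S]

/-- The matched set with label `s`: subjects `i` with `m i = s`. -/
def mSet (m : Fin n → S) (s : S) : Finset (Fin n) :=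
  Finset.univ.filter fun i => m i = s

/-- Matched-set difference `t_s(v, z)` for a vector `v` and assignment `z`. -/
def tdiff (m : Fin n → S) (nT nC : S → ℕ) (v z : Fin n → ℝ) (s : S) : ℝ :=
  (1 / (nT s : ℝ)) * ∑ i ∈ mSet m s, v i * z i
    - (1 / (nC s : ℝ)) * ∑ i ∈ mSet m s, v i * (1 - z i)

/-- Total number treated, `n_T = Σ_s n_T(s)`. -/
def nTtot (nT : S → ℕ) : ℕ := ∑ s, nT s

/-- Matched-set weight `w_s = n_T(s)/n_T`. -/
def w (nT : S → ℕ) (s : S) : ℝ := (nT s : ℝ) / (nTtot nT : ℝ)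

/-- The matching estimator `τ̂_M(v) = Σ_s w_s t_s(v, z)`. -/
def tauM (m : Fin n → S) (nT nC : S → ℕ) (v z : Fin n → ℝ) : ℝ :=
  ∑ s, w nT s * tdiff m nT nC v z s

/-- Observed outcome `Y_i = Z_i y_T(i) + (1 - Z_i) y_C(i)`. -/
def Yobs (yT yC : Fin n → ℝ) (z : Fin n → ℝ) (i : Fin n) : ℝ :=
  z i * yT i + (1 - z i) * yC i

/-- Treatment-assignment probability `P_i = Pr(Z_i = 1)`. -/
def Pr {Ω : Type*} [MeasurableSpace Ω] (μ : Measure Ω) (Z : Ω → Fin n → ℝ)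
    (i : Fin n) : ℝ :=
  (μ {ω | Z ω i = 1}).toReal

/-- The estimand: expected effect of treatment on the treated,
`τ_ETT = (Σ_i τ_i P_i)/n_T`. -/
def tauETT {Ω : Type*} [MeasurableSpace Ω] (μ : Measure Ω) (Z : Ω → Fin n → ℝ)
    (yT yC : Fin n → ℝ) (nT : S → ℕ) : ℝ :=
  (∑ i, (yT i - yC i) * Pr μ Z i) / (nTtot nT : ℝ)

/-- The design constant `C(n, n_T, n_C)`. -/
def Cdesign (n : ℕ) (nT nC : S → ℕ) : ℝ :=
  ((n : ℝ) / (nTtot nT : ℝ) ^ 2) *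
    ∑ s, ((nT s : ℝ) + (nC s : ℝ)) * (max 1 ((nT s : ℝ) / (nC s : ℝ))) ^ 2

/-- Mean squared prediction error `MSE_M = (1/n) Σ_i (ŷ_C(i) - y_C(i))²`. -/
def MSE (yC yhat : Fin n → ℝ) : ℝ :=
  (1 / (n : ℝ)) * ∑ i, (yhat i - yC i) ^ 2

/-!
On a binary assignment, `Y_i Z_i = y_T(i) Z_i` and `Y_i (1 - Z_i) = y_C(i) (1 - Z_i)`, so the
estimator is an affine function of `Z` and its expectation replaces each `Z_i` by `P_i`. Since
`w_s / n_T(s) = 1 / n_T`, the treated-outcome part of that expectation is exactly the `y_T` part of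
`τ_ETT`, and only the control outcomes survive in the bias.
-/

section ZeroOne

variable {Ω : Type*} {X : Ω → ℝ}

lemma eq_indicator_of_zero_or_one (hX : ∀ ω, X ω = 0 ∨ X ω = 1) :
    X = {ω | X ω = 1}.indicator 1 := by
  funext ω
  rcases hX ω with h | h <;> simp [h]

variable [MeasurableSpace Ω] {μ : Measure Ω}

lemma integrable_of_zero_or_one [IsFiniteMeasure μ] (hXm : Measurable X)
    (hX : ∀ ω, X ω = 0 ∨ X ω = 1) : Integrable X μ := by
  rw [eq_indicator_of_zero_or_one hX]
  exact (integrable_const 1).indicator (hXm (measurableSet_singleton 1))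

lemma integral_of_zero_or_one (hXm : Measurable X) (hX : ∀ ω, X ω = 0 ∨ X ω = 1) :
    ∫ ω, X ω ∂μ = μ.real {ω | X ω = 1} := by
  nth_rw 1 [eq_indicator_of_zero_or_one hX]
  exact integral_indicator_one (hXm (measurableSet_singleton 1))

end ZeroOne

variable {n : ℕ} {S : Type*} [DecidableEq S]

lemma tdiff_Yobs (m : Fin n → S) (nT nC : S → ℕ) (yT yC z : Fin n → ℝ)
    (hz : ∀ i, z i = 0 ∨ z i = 1) (s : S) :
    tdiff m nT nC (Yobs yT yC z) z s
      = (1 / (nT s : ℝ)) * ∑ i ∈ mSet m s, yT i * z i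
        - (1 / (nC s : ℝ)) * ∑ i ∈ mSet m s, yC i * (1 - z i) := by
  unfold tdiff
  congr 2 <;> refine sum_congr rfl fun i _ => ?_ <;> rcases hz i with h | h <;> simp [Yobs, h]

section Expectation

variable {Ω : Type*} [MeasurableSpace Ω] (μ : Measure Ω) [IsProbabilityMeasure μ]
  (m : Fin n → S) (nT nC : S → ℕ) (yT yC : Fin n → ℝ) {Z : Ω → Fin n → ℝ}

lemma integrable_tdiff_Yobs (hZmeas : ∀ i, Measurable fun ω => Z ω i)
    (hZ01 : ∀ ω i, Z ω i = 0 ∨ Z ω i = 1) (s : S) :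
    Integrable (fun ω => tdiff m nT nC (Yobs yT yC (Z ω)) (Z ω) s) μ := by
  have hZ : ∀ i, Integrable (fun ω => Z ω i) μ :=
    fun i => integrable_of_zero_or_one (hZmeas i) (hZ01 · i)
  simp_rw [tdiff_Yobs m nT nC yT yC _ (hZ01 _)]
  fun_prop

lemma integral_tdiff_Yobs (hZmeas : ∀ i, Measurable fun ω => Z ω i)
    (hZ01 : ∀ ω i, Z ω i = 0 ∨ Z ω i = 1) (s : S) :
    ∫ ω, tdiff m nT nC (Yobs yT yC (Z ω)) (Z ω) s ∂μ
      = (1 / (nT s : ℝ)) * ∑ i ∈ mSet m s, yT i * Pr μ Z i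
        - (1 / (nC s : ℝ)) * ∑ i ∈ mSet m s, yC i * (1 - Pr μ Z i) := by
  have hZ : ∀ i, Integrable (fun ω => Z ω i) μ :=
    fun i => integrable_of_zero_or_one (hZmeas i) (hZ01 · i)
  have hEZ : ∀ i, ∫ ω, Z ω i ∂μ = Pr μ Z i :=
    fun i => integral_of_zero_or_one (hZmeas i) (hZ01 · i)
  simp_rw [tdiff_Yobs m nT nC yT yC _ (hZ01 _)]
  rw [integral_sub (by fun_prop) (by fun_prop), integral_const_mul, integral_const_mul,
    integral_finsetSum _ (fun i _ => by fun_prop), integral_finsetSum _ (fun i _ => by fun_prop)]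
  simp_rw [integral_const_mul, integral_sub (integrable_const 1) (hZ _), hEZ]
  simp

lemma integral_tauM_Yobs [Fintype S] (hZmeas : ∀ i, Measurable fun ω => Z ω i)
    (hZ01 : ∀ ω i, Z ω i = 0 ∨ Z ω i = 1) :
    ∫ ω, tauM m nT nC (Yobs yT yC (Z ω)) (Z ω) ∂μ
      = ∑ s, w nT s * ((1 / (nT s : ℝ)) * ∑ i ∈ mSet m s, yT i * Pr μ Z i
        - (1 / (nC s : ℝ)) * ∑ i ∈ mSet m s, yC i * (1 - Pr μ Z i)) := by
  unfold tauM
  rw [integral_finsetSum _ fun s _ =>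
    (integrable_tdiff_Yobs μ m nT nC yT yC hZmeas hZ01 s).const_mul _]
  simp_rw [integral_const_mul, integral_tdiff_Yobs μ m nT nC yT yC hZmeas hZ01]

end Expectation

lemma sum_w_mul_inv_nT_mul_sum_mSet [Fintype S] (m : Fin n → S) {nT : S → ℕ}
    (hT : ∀ s, 0 < nT s) (f : Fin n → ℝ) :
    ∑ s, w nT s * ((1 / (nT s : ℝ)) * ∑ i ∈ mSet m s, f i) = (∑ i, f i) / nTtot nT := by
  rw [← sum_fiberwise univ m f, sum_div]
  refine sum_congr rfl fun s _ => ?_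
  have : (nT s : ℝ) ≠ 0 := by exact_mod_cast (hT s).ne'
  rw [w, mSet]
  field_simp

end Rebar

theorem stmt2_general {n : ℕ} {S : Type*} [Fintype S] [DecidableEq S]
    (m : Fin n → S) (nT nC : S → ℕ)
    (hT : ∀ s, 0 < nT s)
    {Ω : Type*} [MeasurableSpace Ω] (μ : Measure Ω) [IsProbabilityMeasure μ]
    (Z : Ω → Fin n → ℝ)
    (hZmeas : ∀ i, Measurable fun ω => Z ω i)
    (hZ01 : ∀ ω i, Z ω i = 0 ∨ Z ω i = 1)
    (yT yC : Fin n → ℝ) :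
    (∫ ω, Rebar.tauM m nT nC (Rebar.Yobs yT yC (Z ω)) (Z ω) ∂μ)
        - Rebar.tauETT μ Z yT yC nT
      = ∑ s, Rebar.w nT s *
          ∑ i ∈ Rebar.mSet m s, yC i *
            (Rebar.Pr μ Z i / (nT s : ℝ) - (1 - Rebar.Pr μ Z i) / (nC s : ℝ)) := by
  rw [Rebar.integral_tauM_Yobs μ m nT nC yT yC hZmeas hZ01, Rebar.tauETT,
    ← Rebar.sum_w_mul_inv_nT_mul_sum_mSet m hT, ← sum_sub_distrib]
  refine sum_congr rfl fun s _ => ?_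
  rw [← mul_sub]
  congr 1
  simp only [mul_sum, ← sum_sub_distrib]
  refine sum_congr rfl fun i _ => ?_
  ring

/-- Lemma: bias of the matching estimator:
`E[τ̂_M(Y)] - τ_ETT = Σ_s w_s Σ_{i : m(i)=s} y_C(i) (P_i/n_T(s) - (1-P_i)/n_C(s))`. -/
theorem stmt2 {n : ℕ} {S : Type*} [Fintype S] [DecidableEq S] [Nonempty S]
    (m : Fin n → S) (nT nC : S → ℕ)
    (hT : ∀ s, 0 < nT s) (hC : ∀ s, 0 < nC s)
    (hsize : ∀ s, nT s + nC s = (Rebar.mSet m s).card)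
    {Ω : Type*} [MeasurableSpace Ω] (μ : Measure Ω) [IsProbabilityMeasure μ]
    (Z : Ω → Fin n → ℝ)
    (hZmeas : ∀ i, Measurable fun ω => Z ω i)
    (hZ01 : ∀ ω i, Z ω i = 0 ∨ Z ω i = 1)
    (hZsum : ∀ᵐ ω ∂μ, ∀ s, ∑ i ∈ Rebar.mSet m s, Z ω i = (nT s : ℝ))
    (yT yC : Fin n → ℝ) :
    (∫ ω, Rebar.tauM m nT nC (Rebar.Yobs yT yC (Z ω)) (Z ω) ∂μ)
        - Rebar.tauETT μ Z yT yC nT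
      = ∑ s, Rebar.w nT s *
          ∑ i ∈ Rebar.mSet m s, yC i *
            (Rebar.Pr μ Z i / (nT s : ℝ) - (1 - Rebar.Pr μ Z i) / (nC s : ℝ)) :=
  stmt2_general m nT nC hT μ Z hZmeas hZ01 yT yC
end
end

section
/- Under perfect matching, the matching estimator is unbiased for the expected effect of the treatment on the treated: if P_i = P_j whenever m(i) = m(j), then E[τ̂_M(Y)] = τ_ETT. -/
open MeasureTheory Finset

noncomputable section

/-!
Subject by subject, the estimator contributes `w_s (y_T Z / n_T(s) - y_C (1 - Z) / n_C(s))`,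
an affine function of the Bernoulli variable `Z_i`, so its expectation is obtained by
substituting `P_i` for `Z_i`. Taking expectations of the constraint `Σ_{i ∈ s} Z_i = n_T(s)`
and using that `P` is constant on matched sets gives `P_i = n_T(s) / (n_T(s) + n_C(s))`;
with this value the contribution of subject `i` collapses to `τ_i P_i / n_T`.
-/

namespace Rebar

section Bernoulli

variable {Ω : Type*} {X : Ω → ℝ}

theorem comp_eq_indicator_of_zero_or_one (h01 : ∀ ω, X ω = 0 ∨ X ω = 1) (g : ℝ → ℝ) :
    (fun ω => g (X ω)) = fun ω => g 0 + {ω | X ω = 1}.indicator (fun _ => g 1 - g 0) ω := by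
  funext ω
  rcases h01 ω with h | h <;> simp [h]

variable [MeasurableSpace Ω] {μ : Measure Ω}

theorem integrable_comp_of_zero_or_one [IsFiniteMeasure μ] (hX : Measurable X)
    (h01 : ∀ ω, X ω = 0 ∨ X ω = 1) (g : ℝ → ℝ) : Integrable (fun ω => g (X ω)) μ := by
  rw [comp_eq_indicator_of_zero_or_one h01]
  exact (integrable_const _).add ((integrable_const _).indicator (hX (measurableSet_singleton 1)))

theorem integral_comp_of_zero_or_one [IsProbabilityMeasure μ] (hX : Measurable X)
    (h01 : ∀ ω, X ω = 0 ∨ X ω = 1) (g : ℝ → ℝ) :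
    ∫ ω, g (X ω) ∂μ = (1 - μ.real {ω | X ω = 1}) * g 0 + μ.real {ω | X ω = 1} * g 1 := by
  have hs : MeasurableSet {ω | X ω = 1} := hX (measurableSet_singleton 1)
  rw [comp_eq_indicator_of_zero_or_one h01,
    integral_add (integrable_const _) ((integrable_const _).indicator hs), integral_const,
    integral_indicator_const _ hs]
  simp only [probReal_univ, smul_eq_mul]
  ring

theorem integral_eq_measureReal_of_zero_or_one [IsProbabilityMeasure μ] (hX : Measurable X)
    (h01 : ∀ ω, X ω = 0 ∨ X ω = 1) : ∫ ω, X ω ∂μ = μ.real {ω | X ω = 1} := by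
  simpa using integral_comp_of_zero_or_one (μ := μ) hX h01 id

end Bernoulli

variable {n : ℕ} {S : Type*}

theorem tauM_eq_sum_subjects [Fintype S] [DecidableEq S] (m : Fin n → S) (nT nC : S → ℕ)
    (v z : Fin n → ℝ) :
    tauM m nT nC v z
      = ∑ i, w nT (m i) * (v i * z i / nT (m i) - v i * (1 - z i) / nC (m i)) := by
  rw [← sum_fiberwise univ m]
  refine sum_congr rfl fun s _ => ?_
  simp only [tdiff, mSet, mul_sub, mul_sum, ← sum_sub_distrib]
  refine sum_congr rfl fun i hi => ?_
  rw [(mem_filter.mp hi).2]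
  ring

def subjectTerm [Fintype S] (m : Fin n → S) (nT nC : S → ℕ) (yT yC : Fin n → ℝ) (i : Fin n)
    (x : ℝ) : ℝ :=
  w nT (m i) * (yT i * x / nT (m i) - yC i * (1 - x) / nC (m i))

theorem tauM_Yobs_eq_sum_subjectTerm [Fintype S] [DecidableEq S] (m : Fin n → S)
    (nT nC : S → ℕ) (yT yC z : Fin n → ℝ) (h01 : ∀ i, z i = 0 ∨ z i = 1) :
    tauM m nT nC (Yobs yT yC z) z = ∑ i, subjectTerm m nT nC yT yC i (z i) := by
  rw [tauM_eq_sum_subjects]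
  refine sum_congr rfl fun i _ => ?_
  rcases h01 i with h | h <;> simp [subjectTerm, Yobs, h]

theorem bernoulli_subjectTerm_eq [Fintype S] (m : Fin n → S) (nT nC : S → ℕ) (yT yC : Fin n → ℝ)
    (hT : ∀ s, 0 < nT s) (hC : ∀ s, 0 < nC s) {i : Fin n} {p : ℝ}
    (hp : p = nT (m i) / (nT (m i) + nC (m i))) :
    (1 - p) * subjectTerm m nT nC yT yC i 0 + p * subjectTerm m nT nC yT yC i 1
      = (yT i - yC i) * p / nTtot nT := by
  have hTi : (nT (m i) : ℝ) ≠ 0 := by exact_mod_cast (hT (m i)).ne'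
  have hCi : (nC (m i) : ℝ) ≠ 0 := by exact_mod_cast (hC (m i)).ne'
  have hsum : (nT (m i) : ℝ) + nC (m i) ≠ 0 := by positivity
  subst hp
  simp only [subjectTerm, w]
  field_simp
  ring

theorem eq_div_of_sum_mSet_eq [DecidableEq S] (m : Fin n → S) (nT nC : S → ℕ)
    (hT : ∀ s, 0 < nT s) (hsize : ∀ s, nT s + nC s = (mSet m s).card) {p : Fin n → ℝ}
    (hsum : ∀ s, ∑ i ∈ mSet m s, p i = nT s) (hconst : ∀ i j, m i = m j → p i = p j)
    (i : Fin n) : p i = nT (m i) / (nT (m i) + nC (m i)) := by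
  have hcard : ∑ j ∈ mSet m (m i), p j = ((nT (m i) : ℝ) + nC (m i)) * p i := by
    rw [sum_congr (s₁ := mSet m (m i)) rfl fun j hj => hconst j i (mem_filter.mp hj).2,
      sum_const, ← hsize, nsmul_eq_mul]
    push_cast
    rfl
  have hpos : (0 : ℝ) < nT (m i) + nC (m i) :=
    add_pos_of_pos_of_nonneg (by exact_mod_cast hT (m i)) (Nat.cast_nonneg _)
  rw [eq_div_iff hpos.ne', mul_comm, ← hcard, hsum]

section Assignment

variable {Ω : Type*} [MeasurableSpace Ω] {μ : Measure Ω} {Z : Ω → Fin n → ℝ}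

theorem sum_Pr_mSet [DecidableEq S] [IsProbabilityMeasure μ] (m : Fin n → S) (nT : S → ℕ)
    (hZmeas : ∀ i, Measurable fun ω => Z ω i) (hZ01 : ∀ ω i, Z ω i = 0 ∨ Z ω i = 1)
    (hZsum : ∀ᵐ ω ∂μ, ∀ s, ∑ i ∈ mSet m s, Z ω i = (nT s : ℝ)) (s : S) :
    ∑ i ∈ mSet m s, Pr μ Z i = nT s := calc
  ∑ i ∈ mSet m s, Pr μ Z i = ∑ i ∈ mSet m s, ∫ ω, Z ω i ∂μ :=
    sum_congr rfl fun i _ =>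
      (integral_eq_measureReal_of_zero_or_one (hZmeas i) fun ω => hZ01 ω i).symm
  _ = ∫ ω, ∑ i ∈ mSet m s, Z ω i ∂μ :=
    (integral_finsetSum _ fun i _ =>
      integrable_comp_of_zero_or_one (hZmeas i) (fun ω => hZ01 ω i) id).symm
  _ = nT s := by
    rw [integral_congr_ae (hZsum.mono fun ω h => h s)]
    simp

end Assignment

end Rebar

open Rebar in
theorem stmt5_general {n : ℕ} {S : Type*} [Fintype S] [DecidableEq S]
    (m : Fin n → S) (nT nC : S → ℕ)
    (hT : ∀ s, 0 < nT s) (hC : ∀ s, 0 < nC s)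
    (hsize : ∀ s, nT s + nC s = (Rebar.mSet m s).card)
    {Ω : Type*} [MeasurableSpace Ω] (μ : Measure Ω) [IsProbabilityMeasure μ]
    (Z : Ω → Fin n → ℝ)
    (hZmeas : ∀ i, Measurable fun ω => Z ω i)
    (hZ01 : ∀ ω i, Z ω i = 0 ∨ Z ω i = 1)
    (hZsum : ∀ᵐ ω ∂μ, ∀ s, ∑ i ∈ Rebar.mSet m s, Z ω i = (nT s : ℝ))
    (hperf : ∀ i j, m i = m j → Rebar.Pr μ Z i = Rebar.Pr μ Z j)
    (yT yC : Fin n → ℝ) :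
    ∫ ω, Rebar.tauM m nT nC (Rebar.Yobs yT yC (Z ω)) (Z ω) ∂μ
      = Rebar.tauETT μ Z yT yC nT := by
  have hP := eq_div_of_sum_mSet_eq m nT nC hT hsize (sum_Pr_mSet m nT hZmeas hZ01 hZsum) hperf
  calc ∫ ω, tauM m nT nC (Yobs yT yC (Z ω)) (Z ω) ∂μ
      = ∫ ω, ∑ i, subjectTerm m nT nC yT yC i (Z ω i) ∂μ :=
        integral_congr_ae (ae_of_all _ fun ω =>
          tauM_Yobs_eq_sum_subjectTerm m nT nC yT yC (Z ω) (hZ01 ω))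
    _ = ∑ i, ∫ ω, subjectTerm m nT nC yT yC i (Z ω i) ∂μ :=
        integral_finsetSum _ fun i _ =>
          integrable_comp_of_zero_or_one (hZmeas i) (fun ω => hZ01 ω i) _
    _ = ∑ i, (yT i - yC i) * Pr μ Z i / nTtot nT := by
        refine sum_congr rfl fun i _ => ?_
        rw [integral_comp_of_zero_or_one (hZmeas i) (fun ω => hZ01 ω i)]
        exact bernoulli_subjectTerm_eq m nT nC yT yC hT hC (hP i)
    _ = tauETT μ Z yT yC nT := by rw [tauETT, sum_div]

/-- Under perfect matching, the matching estimator is unbiased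
for the expected effect of the treatment on the treated: `E[τ̂_M(Y)] = τ_ETT`. -/
theorem stmt5 {n : ℕ} {S : Type*} [Fintype S] [DecidableEq S] [Nonempty S]
    (m : Fin n → S) (nT nC : S → ℕ)
    (hT : ∀ s, 0 < nT s) (hC : ∀ s, 0 < nC s)
    (hsize : ∀ s, nT s + nC s = (Rebar.mSet m s).card)
    {Ω : Type*} [MeasurableSpace Ω] (μ : Measure Ω) [IsProbabilityMeasure μ]
    (Z : Ω → Fin n → ℝ)
    (hZmeas : ∀ i, Measurable fun ω => Z ω i)
    (hZ01 : ∀ ω i, Z ω i = 0 ∨ Z ω i = 1)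
    (hZsum : ∀ᵐ ω ∂μ, ∀ s, ∑ i ∈ Rebar.mSet m s, Z ω i = (nT s : ℝ))
    (hperf : ∀ i j, m i = m j → Rebar.Pr μ Z i = Rebar.Pr μ Z j)
    (yT yC : Fin n → ℝ) :
    ∫ ω, Rebar.tauM m nT nC (Rebar.Yobs yT yC (Z ω)) (Z ω) ∂μ
      = Rebar.tauETT μ Z yT yC nT :=
  stmt5_general m nT nC hT hC hsize μ Z hZmeas hZ01 hZsum hperf yT yC
end
end

section
/- Under perfect matching, the matching estimator applied to the fixed prediction vector has expectation zero: if P_i = P_j whenever m(i) = m(j), then E[τ̂_M(ŷ_C)] = 0. -/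
/-!
Each `t_s(v, z)` is affine in `z`, so `E[τ̂_M(v)]` is `τ̂_M(v)` evaluated at the propensity
vector `P = E[Z]`. Taking expectations in `Σ_{m(i)=s} Z_i = n_T(s)` gives
`Σ_{m(i)=s} P_i = n_T(s)`, so under perfect matching `P_i = n_T(s)/(n_T(s) + n_C(s))` on set `s`.
At that `P` the treated and control parts of `t_s` both equal `(Σ_{m(i)=s} v_i)/(n_T(s) + n_C(s))`,
hence every `t_s` vanishes.
-/

open MeasureTheory Finset

noncomputable section

section ZeroOneIndicator

variable {Ω : Type*} {X : Ω → ℝ}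

lemma eq_indicator_one_of_zero_or_one (h01 : ∀ ω, X ω = 0 ∨ X ω = 1) :
    X = {ω | X ω = 1}.indicator 1 := by
  funext ω
  rcases h01 ω with h | h <;> simp [Set.indicator, h]

variable [MeasurableSpace Ω]

lemma integrable_of_zero_or_one (μ : Measure Ω) [IsFiniteMeasure μ] (hX : Measurable X)
    (h01 : ∀ ω, X ω = 0 ∨ X ω = 1) : Integrable X μ := by
  rw [eq_indicator_one_of_zero_or_one h01]
  exact (integrable_const 1).indicator (hX (measurableSet_singleton 1))

lemma integral_eq_measureReal_of_zero_or_one (μ : Measure Ω) (hX : Measurable X)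
    (h01 : ∀ ω, X ω = 0 ∨ X ω = 1) : ∫ ω, X ω ∂μ = μ.real {ω | X ω = 1} := by
  conv_lhs => rw [eq_indicator_one_of_zero_or_one h01]
  exact integral_indicator_one (hX (measurableSet_singleton 1))

end ZeroOneIndicator

lemma Finset.eq_div_card_of_sum_eq {ι : Type*} {A : Finset ι} {f : ι → ℝ} {c : ℝ}
    (hconst : ∀ i ∈ A, ∀ j ∈ A, f i = f j) (hsum : ∑ j ∈ A, f j = c) {i : ι} (hi : i ∈ A) :
    f i = c / A.card := by
  have hcard : (A.card : ℝ) ≠ 0 := Nat.cast_ne_zero.mpr (Finset.card_ne_zero_of_mem hi)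
  rw [Finset.sum_congr rfl fun j hj => hconst j hj i hi, Finset.sum_const, nsmul_eq_mul] at hsum
  rw [eq_div_iff hcard, ← hsum, mul_comm]

namespace Rebar

variable {n : ℕ} {S : Type*} [DecidableEq S]

section Expectation

variable {Ω : Type*} [MeasurableSpace Ω] {μ : Measure Ω} [IsProbabilityMeasure μ]
  {Z : Ω → Fin n → ℝ}

lemma integrable_tdiff (hZ : ∀ i, Integrable (fun ω => Z ω i) μ) (m : Fin n → S)
    (nT nC : S → ℕ) (v : Fin n → ℝ) (s : S) :
    Integrable (fun ω => tdiff m nT nC v (Z ω) s) μ :=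
  ((integrable_finsetSum _ fun i _ => (hZ i).const_mul _).const_mul _).sub
    ((integrable_finsetSum _ fun i _ => ((integrable_const 1).sub (hZ i)).const_mul _).const_mul _)

lemma integral_tdiff (hZ : ∀ i, Integrable (fun ω => Z ω i) μ) (m : Fin n → S)
    (nT nC : S → ℕ) (v : Fin n → ℝ) (s : S) :
    ∫ ω, tdiff m nT nC v (Z ω) s ∂μ = tdiff m nT nC v (fun i => ∫ ω, Z ω i ∂μ) s := by
  have hZ' i : Integrable (fun ω => 1 - Z ω i) μ := (integrable_const 1).sub (hZ i)
  unfold tdiff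
  rw [integral_sub ((integrable_finsetSum _ fun i _ => (hZ i).const_mul _).const_mul _)
      ((integrable_finsetSum _ fun i _ => (hZ' i).const_mul _).const_mul _),
    integral_const_mul, integral_const_mul,
    integral_finsetSum _ fun i _ => (hZ i).const_mul _,
    integral_finsetSum _ fun i _ => (hZ' i).const_mul _]
  simp only [integral_const_mul, integral_sub (integrable_const 1) (hZ _), integral_const,
    probReal_univ, smul_eq_mul, one_mul]

lemma integral_tauM [Fintype S] (hZ : ∀ i, Integrable (fun ω => Z ω i) μ) (m : Fin n → S)
    (nT nC : S → ℕ) (v : Fin n → ℝ) :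
    ∫ ω, tauM m nT nC v (Z ω) ∂μ = tauM m nT nC v (fun i => ∫ ω, Z ω i ∂μ) := by
  unfold tauM
  rw [integral_finsetSum _ fun s _ => (integrable_tdiff hZ m nT nC v s).const_mul _]
  simp only [integral_const_mul, integral_tdiff hZ]

end Expectation

lemma tdiff_eq_zero_of_eq_propensity (m : Fin n → S) (nT nC : S → ℕ) (v p : Fin n → ℝ)
    (s : S) (hT : nT s ≠ 0) (hC : nC s ≠ 0)
    (hp : ∀ i ∈ mSet m s, p i = nT s / (nT s + nC s)) :
    tdiff m nT nC v p s = 0 := by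
  have hTC : (nT s + nC s : ℝ) ≠ 0 := by positivity
  have hsum (f : ℝ → ℝ) :
      ∑ i ∈ mSet m s, v i * f (p i) = (∑ i ∈ mSet m s, v i) * f (nT s / (nT s + nC s)) := by
    rw [Finset.sum_mul]
    exact Finset.sum_congr rfl fun i hi => by rw [hp i hi]
  unfold tdiff
  rw [hsum (fun x => x), hsum (fun x => 1 - x)]
  field_simp
  ring

end Rebar

theorem stmt7_general {n : ℕ} {S : Type*} [Fintype S] [DecidableEq S]
    (m : Fin n → S) (nT nC : S → ℕ)
    (hT : ∀ s, 0 < nT s) (hC : ∀ s, 0 < nC s)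
    (hsize : ∀ s, nT s + nC s = (Rebar.mSet m s).card)
    {Ω : Type*} [MeasurableSpace Ω] (μ : Measure Ω) [IsProbabilityMeasure μ]
    (Z : Ω → Fin n → ℝ)
    (hZmeas : ∀ i, Measurable fun ω => Z ω i)
    (hZ01 : ∀ ω i, Z ω i = 0 ∨ Z ω i = 1)
    (hZsum : ∀ᵐ ω ∂μ, ∀ s, ∑ i ∈ Rebar.mSet m s, Z ω i = (nT s : ℝ))
    (hperf : ∀ i j, m i = m j → Rebar.Pr μ Z i = Rebar.Pr μ Z j)
    (yhat : Fin n → ℝ) :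
    ∫ ω, Rebar.tauM m nT nC yhat (Z ω) ∂μ = 0 := by
  have hZint i : Integrable (fun ω => Z ω i) μ :=
    integrable_of_zero_or_one μ (hZmeas i) (hZ01 · i)
  have hEZ i : ∫ ω, Z ω i ∂μ = Rebar.Pr μ Z i :=
    integral_eq_measureReal_of_zero_or_one μ (hZmeas i) (hZ01 · i)
  have hPsum s : ∑ i ∈ Rebar.mSet m s, Rebar.Pr μ Z i = nT s := by
    simp only [← hEZ, ← integral_finsetSum _ fun i _ => hZint i]
    rw [integral_congr_ae (hZsum.mono fun ω h => h s)]
    simp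
  have hP s : ∀ i ∈ Rebar.mSet m s, Rebar.Pr μ Z i = nT s / (nT s + nC s) := by
    intro i hi
    have hmem {j} (hj : j ∈ Rebar.mSet m s) : m j = s := (Finset.mem_filter.mp hj).2
    rw [Finset.eq_div_card_of_sum_eq (fun j hj k hk => hperf j k ((hmem hj).trans (hmem hk).symm))
      (hPsum s) hi, ← hsize s, Nat.cast_add]
  rw [Rebar.integral_tauM hZint]
  refine Finset.sum_eq_zero fun s _ => ?_
  rw [Rebar.tdiff_eq_zero_of_eq_propensity m nT nC yhat _ s (hT s).ne' (hC s).ne'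
    fun i hi => (hEZ i).trans (hP s i hi), mul_zero]

/-- Under perfect matching, the matching estimator applied to the
fixed prediction vector has expectation zero: `E[τ̂_M(ŷ_C)] = 0`. -/
theorem stmt7 {n : ℕ} {S : Type*} [Fintype S] [DecidableEq S] [Nonempty S]
    (m : Fin n → S) (nT nC : S → ℕ)
    (hT : ∀ s, 0 < nT s) (hC : ∀ s, 0 < nC s)
    (hsize : ∀ s, nT s + nC s = (Rebar.mSet m s).card)
    {Ω : Type*} [MeasurableSpace Ω] (μ : Measure Ω) [IsProbabilityMeasure μ]
    (Z : Ω → Fin n → ℝ)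
    (hZmeas : ∀ i, Measurable fun ω => Z ω i)
    (hZ01 : ∀ ω i, Z ω i = 0 ∨ Z ω i = 1)
    (hZsum : ∀ᵐ ω ∂μ, ∀ s, ∑ i ∈ Rebar.mSet m s, Z ω i = (nT s : ℝ))
    (hperf : ∀ i j, m i = m j → Rebar.Pr μ Z i = Rebar.Pr μ Z j)
    (yhat : Fin n → ℝ) :
    ∫ ω, Rebar.tauM m nT nC yhat (Z ω) ∂μ = 0 :=
  stmt7_general m nT nC hT hC hsize μ Z hZmeas hZ01 hZsum hperf yhat
end
end

section
/- (Proposition 3, MSE form.) The squared bias of the rebar estimator is bounded by the mean squared prediction error in the matched sample times a design constant: (E[τ̂_rebar] − τ_ETT)² ≤ MSE_M · C(n, n_T, n_C). -/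
open MeasureTheory Finset

noncomputable section

/-!
Because each `Z_i` is binary, the rebar estimator is an affine function of `Z`, so its expectation
is obtained by replacing each `Z_i` with `P_i`. The bias then collapses to
`Σ_i (ŷ_C(i) - y_C(i)) (ρ_i (1 - P_i) - P_i) / n_T`, where `ρ_i = n_T(s)/n_C(s)` for the set `s`
of `i`. Cauchy–Schwarz and `|ρ (1 - P) - P| ≤ max 1 ρ` for `P ∈ [0, 1]` give the bound, and the
sum of `max 1 ρ_i ^ 2` over units regroups into the sum over matched sets in `C(n, n_T, n_C)`.
-/

namespace Rebar

variable {n : ℕ} {S : Type*} [Fintype S] [DecidableEq S]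

def ratio (nT nC : S → ℕ) (s : S) : ℝ := (nT s : ℝ) / (nC s : ℝ)

theorem sum_sum_mSet (m : Fin n → S) (f : Fin n → ℝ) :
    ∑ s, ∑ i ∈ mSet m s, f i = ∑ i, f i := by
  simpa [mSet] using Finset.sum_fiberwise Finset.univ m f

theorem sum_comp_eq_sum_card_mul (m : Fin n → S) (g : S → ℝ) :
    ∑ i, g (m i) = ∑ s, ((mSet m s).card : ℝ) * g s := by
  rw [← sum_sum_mSet m]
  refine Finset.sum_congr rfl fun s _ => ?_
  rw [Finset.sum_congr rfl fun i hi => by rw [(Finset.mem_filter.1 hi).2], Finset.sum_const,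
    nsmul_eq_mul]

theorem tauM_residual_eq (m : Fin n → S) (nT nC : S → ℕ) (hT : ∀ s, 0 < nT s)
    (yT yC yhat z : Fin n → ℝ) (hz : ∀ i, z i = 0 ∨ z i = 1) :
    tauM m nT nC (fun i => Yobs yT yC z i - yhat i) z
      = (∑ i, (z i * (yT i - yhat i + ratio nT nC (m i) * (yC i - yhat i))
          - ratio nT nC (m i) * (yC i - yhat i))) / nTtot nT := by
  rw [← sum_sum_mSet m, Finset.sum_div]
  refine Finset.sum_congr rfl fun s _ => ?_
  have hTs : (nT s : ℝ) ≠ 0 := by exact_mod_cast (hT s).ne'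
  simp only [tdiff, mul_sub, Finset.mul_sum, ← Finset.sum_sub_distrib, Finset.sum_div]
  refine Finset.sum_congr rfl fun i hi => ?_
  rw [(Finset.mem_filter.1 hi).2]
  rcases hz i with h | h <;> simp only [w, ratio, Yobs, h] <;> field_simp <;> ring

theorem integral_sum_affine {ι Ω : Type*} [Fintype ι] [MeasurableSpace Ω] {μ : Measure Ω}
    [IsProbabilityMeasure μ] {X : ι → Ω → ℝ} (hX : ∀ i, Integrable (X i) μ) (a b : ι → ℝ) :
    ∫ ω, ∑ i, (X i ω * a i - b i) ∂μ = ∑ i, ((∫ ω, X i ω ∂μ) * a i - b i) := by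
  have hint : ∀ i, Integrable (fun ω => X i ω * a i - b i) μ := fun i =>
    ((hX i).mul_const (a i)).sub (integrable_const (b i))
  rw [integral_finsetSum Finset.univ fun i _ => hint i]
  refine Finset.sum_congr rfl fun i _ => ?_
  rw [integral_sub ((hX i).mul_const (a i)) (integrable_const (b i)), integral_mul_const,
    integral_const, probReal_univ, one_smul]

theorem coord_eq_indicator {Ω : Type*} {Z : Ω → Fin n → ℝ}
    (hZ01 : ∀ ω i, Z ω i = 0 ∨ Z ω i = 1) (i : Fin n) :
    (fun ω => Z ω i) = {ω | Z ω i = 1}.indicator 1 := by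
  funext ω
  rcases hZ01 ω i with h | h <;> simp [Set.indicator, h]

section Assignment

variable {Ω : Type*} [MeasurableSpace Ω] {μ : Measure Ω} {Z : Ω → Fin n → ℝ}

theorem Pr_nonneg (i : Fin n) : 0 ≤ Pr μ Z i := ENNReal.toReal_nonneg

theorem Pr_le_one [IsProbabilityMeasure μ] (i : Fin n) : Pr μ Z i ≤ 1 := measureReal_le_one

theorem integrable_coord [IsFiniteMeasure μ] (hZmeas : ∀ i, Measurable fun ω => Z ω i)
    (hZ01 : ∀ ω i, Z ω i = 0 ∨ Z ω i = 1) (i : Fin n) : Integrable (fun ω => Z ω i) μ := by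
  rw [coord_eq_indicator hZ01 i]
  exact (integrable_const 1).indicator (hZmeas i (measurableSet_singleton 1))

theorem integral_coord (hZmeas : ∀ i, Measurable fun ω => Z ω i)
    (hZ01 : ∀ ω i, Z ω i = 0 ∨ Z ω i = 1) (i : Fin n) : ∫ ω, Z ω i ∂μ = Pr μ Z i := by
  have hA : MeasurableSet {ω | Z ω i = 1} := hZmeas i (measurableSet_singleton 1)
  rw [coord_eq_indicator hZ01 i, Pi.one_def, integral_indicator_const 1 hA, smul_eq_mul, mul_one]
  rfl

end Assignment

theorem sq_mul_one_sub_sub_le_max_sq {p r : ℝ} (hp0 : 0 ≤ p) (hp1 : p ≤ 1) (hr : 0 ≤ r) :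
    (r * (1 - p) - p) ^ 2 ≤ max 1 r ^ 2 := by
  have h1 := le_max_left 1 r
  have h2 := le_max_right 1 r
  apply sq_le_sq' <;> nlinarith [mul_nonneg hr hp0, mul_nonneg hr (sub_nonneg.2 hp1)]

theorem sum_sq_mul_sum_max_sq_div_eq_MSE_mul_Cdesign (m : Fin n → S) (nT nC : S → ℕ)
    (hsize : ∀ s, nT s + nC s = (mSet m s).card) (yC yhat : Fin n → ℝ) :
    (∑ i, (yhat i - yC i) ^ 2) * (∑ i, max 1 (ratio nT nC (m i)) ^ 2) / (nTtot nT : ℝ) ^ 2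
      = MSE yC yhat * Cdesign n nT nC := by
  rcases Nat.eq_zero_or_pos n with rfl | hn
  · simp [MSE, Cdesign]
  · have hn' : (n : ℝ) ≠ 0 := by exact_mod_cast hn.ne'
    rw [sum_comp_eq_sum_card_mul m fun s => max 1 (ratio nT nC s) ^ 2]
    simp only [MSE, Cdesign, ratio, ← hsize, Nat.cast_add]
    field_simp

end Rebar

open Rebar in
theorem stmt12_general {n : ℕ} {S : Type*} [Fintype S] [DecidableEq S]
    (m : Fin n → S) (nT nC : S → ℕ)
    (hT : ∀ s, 0 < nT s)
    (hsize : ∀ s, nT s + nC s = (Rebar.mSet m s).card)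
    {Ω : Type*} [MeasurableSpace Ω] (μ : Measure Ω) [IsProbabilityMeasure μ]
    (Z : Ω → Fin n → ℝ)
    (hZmeas : ∀ i, Measurable fun ω => Z ω i)
    (hZ01 : ∀ ω i, Z ω i = 0 ∨ Z ω i = 1)
    (yT yC yhat : Fin n → ℝ) :
    ((∫ ω, Rebar.tauM m nT nC
          (fun i => Rebar.Yobs yT yC (Z ω) i - yhat i) (Z ω) ∂μ)
        - Rebar.tauETT μ Z yT yC nT) ^ 2
      ≤ Rebar.MSE yC yhat * Rebar.Cdesign n nT nC := by
  set r : Fin n → ℝ := fun i => ratio nT nC (m i)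
  have hbias : (∫ ω, tauM m nT nC (fun i => Yobs yT yC (Z ω) i - yhat i) (Z ω) ∂μ)
      - tauETT μ Z yT yC nT
      = (∑ i, (yhat i - yC i) * (r i * (1 - Pr μ Z i) - Pr μ Z i)) / nTtot nT := by
    simp_rw [tauM_residual_eq m nT nC hT yT yC yhat _ (hZ01 _), integral_div,
      integral_sum_affine (integrable_coord hZmeas hZ01), integral_coord hZmeas hZ01, tauETT,
      ← sub_div, ← Finset.sum_sub_distrib]
    congr 1
    refine Finset.sum_congr rfl fun i _ => ?_
    ring
  have hterm : ∀ i, (r i * (1 - Pr μ Z i) - Pr μ Z i) ^ 2 ≤ max 1 (r i) ^ 2 := fun i =>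
    sq_mul_one_sub_sub_le_max_sq (Pr_nonneg i) (Pr_le_one i)
      (div_nonneg (Nat.cast_nonneg _) (Nat.cast_nonneg _))
  rw [hbias, div_pow, ← sum_sq_mul_sum_max_sq_div_eq_MSE_mul_Cdesign m nT nC hsize]
  gcongr
  calc (∑ i, (yhat i - yC i) * (r i * (1 - Pr μ Z i) - Pr μ Z i)) ^ 2
      ≤ (∑ i, (yhat i - yC i) ^ 2) * ∑ i, (r i * (1 - Pr μ Z i) - Pr μ Z i) ^ 2 :=
        Finset.sum_mul_sq_le_sq_mul_sq _ _ _
    _ ≤ (∑ i, (yhat i - yC i) ^ 2) * ∑ i, max 1 (r i) ^ 2 :=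
        mul_le_mul_of_nonneg_left (Finset.sum_le_sum fun i _ => hterm i) (by positivity)

/-- Proposition 3, MSE form: the squared bias of the rebar
estimator is bounded by `MSE_M · C(n, n_T, n_C)`. -/
theorem stmt12 {n : ℕ} {S : Type*} [Fintype S] [DecidableEq S] [Nonempty S]
    (m : Fin n → S) (nT nC : S → ℕ)
    (hT : ∀ s, 0 < nT s) (hC : ∀ s, 0 < nC s)
    (hsize : ∀ s, nT s + nC s = (Rebar.mSet m s).card)
    {Ω : Type*} [MeasurableSpace Ω] (μ : Measure Ω) [IsProbabilityMeasure μ]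
    (Z : Ω → Fin n → ℝ)
    (hZmeas : ∀ i, Measurable fun ω => Z ω i)
    (hZ01 : ∀ ω i, Z ω i = 0 ∨ Z ω i = 1)
    (hZsum : ∀ᵐ ω ∂μ, ∀ s, ∑ i ∈ Rebar.mSet m s, Z ω i = (nT s : ℝ))
    (yT yC yhat : Fin n → ℝ) :
    ((∫ ω, Rebar.tauM m nT nC
          (fun i => Rebar.Yobs yT yC (Z ω) i - yhat i) (Z ω) ∂μ)
        - Rebar.tauETT μ Z yT yC nT) ^ 2
      ≤ Rebar.MSE yC yhat * Rebar.Cdesign n nT nC :=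
  stmt12_general m nT nC hT hsize μ Z hZmeas hZ01 yT yC yhat
end
end

section
/- In a pair-matching design, if the odds-ratio sensitivity condition holds at level Γ, then within each matched pair the bias coefficient is small: if n_T(s) = n_C(s) = 1 for all s ∈ S, Γ ≥ 1, and for all i ≠ j with m(i) = m(j) one has 0 < P_i < 1, 0 < P_j < 1, and 1/Γ ≤ (P_i·(1−P_j))/(P_j·(1−P_i)) ≤ Γ, then for every subject i, |P_i/n_T(m(i)) − (1−P_i)/n_C(m(i))| = |2P_i − 1| ≤ (√Γ − 1)/(√Γ + 1). -/
open MeasureTheory Finset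

noncomputable section

/-! In a matched pair `{i, j}` exactly one subject is treated, so `P_j = 1 - P_i` and the odds
ratio of the pair is the squared odds `(P_i / (1 - P_i))²`. The sensitivity condition then pins
the odds between `1/√Γ` and `√Γ`, and `2p - 1 = (x - 1)/(x + 1)` for odds `x`. -/

lemma Finset.exists_eq_pair_of_card_eq_two {α : Type*} [DecidableEq α] {s : Finset α} {i : α}
    (hi : i ∈ s) (hs : s.card = 2) : ∃ j, j ≠ i ∧ s = {i, j} := by
  have herase : (s.erase i).card = 1 := by rw [Finset.card_erase_of_mem hi, hs]
  obtain ⟨j, hj⟩ := Finset.card_eq_one.1 herase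
  have hjs : j ∈ s.erase i := hj ▸ Finset.mem_singleton_self j
  exact ⟨j, Finset.ne_of_mem_erase hjs, by rw [← hj, Finset.insert_erase hi]⟩

lemma abs_two_mul_sub_one_le_of_odds_le {p g : ℝ} (h₁ : p ≤ g * (1 - p))
    (h₂ : 1 - p ≤ g * p) : |2 * p - 1| ≤ (g - 1) / (g + 1) := by
  have hg1 : 0 < g + 1 := by linarith
  rw [abs_le, ← neg_div, div_le_iff₀ hg1, le_div_iff₀ hg1]
  constructor <;> nlinarith

lemma abs_two_mul_sub_one_le_of_sq_odds_mem {p Γ : ℝ} (hp0 : 0 < p) (hp1 : p < 1)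
    (hlo : 1 / Γ ≤ p ^ 2 / (1 - p) ^ 2) (hhi : p ^ 2 / (1 - p) ^ 2 ≤ Γ) :
    |2 * p - 1| ≤ (√Γ - 1) / (√Γ + 1) := by
  have hq : 0 < 1 - p := by linarith
  have hΓ : 0 < Γ := (by positivity : 0 < p ^ 2 / (1 - p) ^ 2).trans_le hhi
  apply abs_two_mul_sub_one_le_of_odds_le
  · rw [← div_le_iff₀ hq, Real.le_sqrt' (div_pos hp0 hq), div_pow]
    exact hhi
  · rw [← div_le_iff₀ hp0, Real.le_sqrt' (div_pos hq hp0), div_pow]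
    rwa [one_div_le hΓ (by positivity), one_div_div] at hlo

namespace Rebar

lemma mem_mSet {n : ℕ} {S : Type*} [DecidableEq S] {m : Fin n → S} {s : S} {i : Fin n} :
    i ∈ mSet m s ↔ m i = s := by
  simp [mSet]

lemma Pr_eq_one_sub_of_ae_add_eq_one {n : ℕ} {Ω : Type*} [MeasurableSpace Ω] {μ : Measure Ω}
    [IsProbabilityMeasure μ] {Z : Ω → Fin n → ℝ} {i j : Fin n}
    (hi : Measurable fun ω => Z ω i) (hj01 : ∀ ω, Z ω j = 0 ∨ Z ω j = 1)
    (hsum : ∀ᵐ ω ∂μ, Z ω i + Z ω j = 1) : Pr μ Z j = 1 - Pr μ Z i := by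
  have hcompl : ({ω | Z ω j = 1} : Set Ω) =ᵐ[μ] ({ω | Z ω i = 1}ᶜ : Set Ω) := by
    rw [Filter.eventuallyEq_set]
    filter_upwards [hsum] with ω hω
    show Z ω j = 1 ↔ Z ω i ≠ 1
    rcases hj01 ω with h | h <;> simp only [h] at hω ⊢ <;> norm_num <;> linarith
  simp only [Pr, ← measureReal_def]
  rw [measureReal_congr hcompl]
  exact probReal_compl_eq_one_sub (hi (measurableSet_singleton 1))

end Rebar

theorem stmt17_general {n : ℕ} {S : Type*} [Fintype S] [DecidableEq S]
    (m : Fin n → S) (nT nC : S → ℕ)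
    (hsize : ∀ s, nT s + nC s = (Rebar.mSet m s).card)
    {Ω : Type*} [MeasurableSpace Ω] (μ : Measure Ω) [IsProbabilityMeasure μ]
    (Z : Ω → Fin n → ℝ)
    (hZmeas : ∀ i, Measurable fun ω => Z ω i)
    (hZ01 : ∀ ω i, Z ω i = 0 ∨ Z ω i = 1)
    (hZsum : ∀ᵐ ω ∂μ, ∀ s, ∑ i ∈ Rebar.mSet m s, Z ω i = (nT s : ℝ))
    (hpair : ∀ s, nT s = 1 ∧ nC s = 1)
    (Γ : ℝ)
    (hsens : ∀ i j : Fin n, i ≠ j → m i = m j →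
      0 < Rebar.Pr μ Z i ∧ Rebar.Pr μ Z i < 1 ∧
      0 < Rebar.Pr μ Z j ∧ Rebar.Pr μ Z j < 1 ∧
      1 / Γ ≤ (Rebar.Pr μ Z i * (1 - Rebar.Pr μ Z j))
                / (Rebar.Pr μ Z j * (1 - Rebar.Pr μ Z i)) ∧
      (Rebar.Pr μ Z i * (1 - Rebar.Pr μ Z j))
                / (Rebar.Pr μ Z j * (1 - Rebar.Pr μ Z i)) ≤ Γ) :
    ∀ i : Fin n,
      |Rebar.Pr μ Z i / (nT (m i) : ℝ) - (1 - Rebar.Pr μ Z i) / (nC (m i) : ℝ)|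
          = |2 * Rebar.Pr μ Z i - 1|
      ∧ |2 * Rebar.Pr μ Z i - 1| ≤ (Real.sqrt Γ - 1) / (Real.sqrt Γ + 1) := by
  intro i
  obtain ⟨hTi, hCi⟩ := hpair (m i)
  refine ⟨by rw [hTi, hCi]; congr 1; push_cast; ring, ?_⟩
  obtain ⟨j, hji, hset⟩ := Finset.exists_eq_pair_of_card_eq_two (s := Rebar.mSet m (m i))
    (Rebar.mem_mSet.2 rfl) (by have := hsize (m i); omega)
  have hmj : m j = m i :=
    Rebar.mem_mSet.1 (hset ▸ Finset.mem_insert_of_mem (Finset.mem_singleton_self j))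
  have hPj : Rebar.Pr μ Z j = 1 - Rebar.Pr μ Z i := by
    refine Rebar.Pr_eq_one_sub_of_ae_add_eq_one (hZmeas i) (fun ω => hZ01 ω j) ?_
    filter_upwards [hZsum] with ω hω
    simpa [hset, Finset.sum_pair hji.symm, hTi] using hω (m i)
  obtain ⟨hp0, hp1, -, -, hlo, hhi⟩ := hsens i j hji.symm hmj.symm
  have hodds : ∀ p : ℝ, p * (1 - (1 - p)) / ((1 - p) * (1 - p)) = p ^ 2 / (1 - p) ^ 2 := by
    intro p; ring
  rw [hPj, hodds] at hlo hhi
  exact abs_two_mul_sub_one_le_of_sq_odds_mem hp0 hp1 hlo hhi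

/-- In a pair-matching design under the odds-ratio sensitivity
condition at level Γ, for every subject
`|P_i/n_T(m(i)) - (1-P_i)/n_C(m(i))| = |2P_i - 1| ≤ (√Γ - 1)/(√Γ + 1)`. -/
theorem stmt17 {n : ℕ} {S : Type*} [Fintype S] [DecidableEq S] [Nonempty S]
    (m : Fin n → S) (nT nC : S → ℕ)
    (hT : ∀ s, 0 < nT s) (hC : ∀ s, 0 < nC s)
    (hsize : ∀ s, nT s + nC s = (Rebar.mSet m s).card)
    {Ω : Type*} [MeasurableSpace Ω] (μ : Measure Ω) [IsProbabilityMeasure μ]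
    (Z : Ω → Fin n → ℝ)
    (hZmeas : ∀ i, Measurable fun ω => Z ω i)
    (hZ01 : ∀ ω i, Z ω i = 0 ∨ Z ω i = 1)
    (hZsum : ∀ᵐ ω ∂μ, ∀ s, ∑ i ∈ Rebar.mSet m s, Z ω i = (nT s : ℝ))
    (hpair : ∀ s, nT s = 1 ∧ nC s = 1)
    (Γ : ℝ) (hΓ : 1 ≤ Γ)
    (hsens : ∀ i j : Fin n, i ≠ j → m i = m j →
      0 < Rebar.Pr μ Z i ∧ Rebar.Pr μ Z i < 1 ∧
      0 < Rebar.Pr μ Z j ∧ Rebar.Pr μ Z j < 1 ∧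
      1 / Γ ≤ (Rebar.Pr μ Z i * (1 - Rebar.Pr μ Z j))
                / (Rebar.Pr μ Z j * (1 - Rebar.Pr μ Z i)) ∧
      (Rebar.Pr μ Z i * (1 - Rebar.Pr μ Z j))
                / (Rebar.Pr μ Z j * (1 - Rebar.Pr μ Z i)) ≤ Γ) :
    ∀ i : Fin n,
      |Rebar.Pr μ Z i / (nT (m i) : ℝ) - (1 - Rebar.Pr μ Z i) / (nC (m i) : ℝ)|
          = |2 * Rebar.Pr μ Z i - 1|
      ∧ |2 * Rebar.Pr μ Z i - 1| ≤ (Real.sqrt Γ - 1) / (Real.sqrt Γ + 1) :=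
  stmt17_general m nT nC hsize μ Z hZmeas hZ01 hZsum hpair Γ hsens
end
end
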